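/- For ν ≥ 1, the function ρ(ℓ) = e^(-ℓ)·(1/Σ(ν+1,ν+1))·Σ_{i=1}^{ν+1} Σ(ν-i+2, ν+1)·ℓ^(i-1)/(i-1)!, with Σ(i,j) = C(i+j-2, i-1)/2^(i+j-1), satisfies ρ''(0) = 1/(1-2ν). -/

import Mathlib

/-!
Write `ρ ν ℓ = exp (-ℓ) * p ℓ`, where `p` is the polynomial with coefficients `a k / k!`,
`a k = Σ(ν+1-k, ν+1) / Σ(ν+1, ν+1)` for `k ≤ ν`.
Then `ρ''(0) = p''(0) - 2 p'(0) + p(0) = a 2 - 2 a 1 + a 0`.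
The ratio `Σ(i+1, j) · 2i = Σ(i, j) · (i+j-1)` of neighbouring entries gives `a 1 = 1` and
`a 2 = 2(ν-1)/(2ν-1)` (for `ν = 1` the term `a 2` is absent from the sum, and the formula still
gives `0`), whence `ρ''(0) = 1/(1-2ν)`.
-/

noncomputable def Sig (i j : ℕ) : ℝ :=
  (Nat.choose (i + j - 2) (i - 1) : ℝ) / 2 ^ (i + j - 1)

noncomputable def ρ (ν : ℕ) (ℓ : ℝ) : ℝ :=
  Real.exp (-ℓ) * (1 / Sig (ν + 1) (ν + 1)) *
    ∑ i ∈ Finset.Icc 1 (ν + 1),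
      Sig (ν + 2 - i) (ν + 1) * ℓ ^ (i - 1) / (Nat.factorial (i - 1) : ℝ)

open Polynomial Real

lemma Sig_succ_succ (i j : ℕ) : Sig (i + 1) (j + 1) = (i + j).choose i / 2 ^ (i + j + 1) := by
  simp only [Sig, Nat.add_sub_cancel]
  congr 3 <;> omega

lemma Sig_pos (i j : ℕ) : 0 < Sig (i + 1) (j + 1) := by
  rw [Sig_succ_succ]
  exact div_pos (by exact_mod_cast Nat.choose_pos (by omega)) (by positivity)

lemma Sig_succ_left_mul (i j : ℕ) :
    Sig (i + 2) (j + 1) * (2 * (i + 1)) = Sig (i + 1) (j + 1) * (i + j + 1) := by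
  have hchoose :
      ((i + j + 1 : ℕ) : ℝ) * (i + j).choose i = (i + j + 1).choose (i + 1) * (i + 1) := by
    exact_mod_cast Nat.add_one_mul_choose_eq (i + j) i
  rw [Sig_succ_succ (i + 1), Sig_succ_succ, show i + 1 + j = i + j + 1 by ring, pow_succ]
  push_cast at hchoose
  field_simp
  linear_combination -hchoose

lemma Sig_diag_eq (n : ℕ) : Sig (n + 2) (n + 2) = Sig (n + 1) (n + 2) := by
  have h := Sig_succ_left_mul n (n + 1)
  have hpos : (0 : ℝ) < 2 * (n + 1) := by positivity
  push_cast at h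
  nlinarith

noncomputable def rhoPoly (ν : ℕ) : ℝ[X] :=
  ∑ k ∈ Finset.range (ν + 1),
    C (Sig (ν + 1 - k) (ν + 1) / Sig (ν + 1) (ν + 1) / k.factorial) * X ^ k

lemma rhoPoly_coeff (ν k : ℕ) : (rhoPoly ν).coeff k =
    if k ≤ ν then Sig (ν + 1 - k) (ν + 1) / Sig (ν + 1) (ν + 1) / k.factorial else 0 := by
  simp only [rhoPoly, finsetSum_coeff, coeff_C_mul_X_pow]
  rw [Finset.sum_ite_eq]
  simp

lemma ρ_eq_exp_neg_mul_eval (ν : ℕ) : ρ ν = fun x => exp (-x) * (rhoPoly ν).eval x := by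
  ext x
  rw [ρ, rhoPoly, eval_finsetSum, mul_assoc, Finset.mul_sum, ← Finset.Ico_add_one_right_eq_Icc,
    Finset.sum_Ico_eq_sum_range, Nat.add_sub_cancel]
  congr 1
  refine Finset.sum_congr rfl fun k hk => ?_
  rw [show ν + 2 - (1 + k) = ν + 1 - k by omega, Nat.add_sub_cancel_left]
  simp only [eval_mul, eval_C, eval_pow, eval_X]
  ring

lemma deriv_exp_neg_mul_eval (p : ℝ[X]) :
    deriv (fun x => exp (-x) * p.eval x) = fun x => exp (-x) * (derivative p - p).eval x := by
  ext x
  have hexp : HasDerivAt (fun x : ℝ => exp (-x)) (-exp (-x)) x := by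
    simpa using (hasDerivAt_neg x).exp
  rw [(hexp.fun_mul (p.hasDerivAt x)).deriv, eval_sub]
  ring

lemma deriv_deriv_exp_neg_mul_eval_zero (p : ℝ[X]) :
    deriv (deriv fun x => exp (-x) * p.eval x) 0 = 2 * p.coeff 2 - 2 * p.coeff 1 + p.coeff 0 := by
  simp only [deriv_exp_neg_mul_eval, neg_zero, exp_zero, one_mul, ← coeff_zero_eq_eval_zero,
    coeff_sub, coeff_derivative]
  norm_num
  ring

lemma rhoPoly_coeff_zero (ν : ℕ) : (rhoPoly ν).coeff 0 = 1 := by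
  simp [rhoPoly_coeff, (Sig_pos ν ν).ne']

lemma rhoPoly_coeff_one (n : ℕ) : (rhoPoly (n + 1)).coeff 1 = 1 := by
  simp [rhoPoly_coeff, ← Sig_diag_eq, (Sig_pos (n + 1) (n + 1)).ne']

lemma two_mul_rhoPoly_coeff_two (n : ℕ) :
    2 * (rhoPoly (n + 1)).coeff 2 = 2 * n / (2 * n + 1) := by
  rcases n with _ | n
  · simp [rhoPoly_coeff]
  · have h : Sig (n + 2) (n + 3) * (2 * (n + 1)) = Sig (n + 1) (n + 3) * (2 * n + 3) := by
      convert Sig_succ_left_mul n (n + 2) using 2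
      push_cast
      ring
    have hpos := Sig_pos (n + 1) (n + 2)
    rw [rhoPoly_coeff, if_pos (by omega), show n + 1 + 1 + 1 - 2 = n + 1 by omega,
      Sig_diag_eq (n + 1)]
    simp only [Nat.add_assoc, Nat.reduceAdd] at hpos ⊢
    push_cast
    field_simp
    linear_combination -h

theorem stmt_10 (ν : ℕ) (hν : 1 ≤ ν) :
    deriv (deriv (ρ ν)) 0 = 1 / (1 - 2 * (ν : ℝ)) := by
  obtain ⟨n, rfl⟩ : ∃ n, ν = n + 1 := ⟨ν - 1, by omega⟩
  rw [ρ_eq_exp_neg_mul_eval, deriv_deriv_exp_neg_mul_eval_zero, two_mul_rhoPoly_coeff_two,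
    rhoPoly_coeff_one, rhoPoly_coeff_zero]
  have hne : 1 - 2 * ((n + 1 : ℕ) : ℝ) ≠ 0 := by
    push_cast
    linarith [(n.cast_nonneg : (0 : ℝ) ≤ n)]
  push_cast at hne ⊢
  field_simp
  ring
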